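/- arXiv:2401.13901 — 4 statements merged into one kernel-verified Lean document; each statement's English description precedes it below -/
import Mathlib

section
/- Define a sequence by n₁ = 1 and n_{i+1} = n_i·2^{2i} for i ≥ 1, and let f : [1,∞) → ℝ≥0 be the function with f(n) = 2·n_i for n_i ≤ n < n_{i+1}. Then f is nondecreasing, f ⪯ 𝔦, ¬(𝔦 ⪯ f) (so f ≺ 𝔦), and yet ¬(f ≪ 𝔦). In particular f ≺ 𝔦 does not imply f ≪ 𝔦. -/
/-- `h ⪯ f` : there are positive integers `K, M` and an integer `N₀ ≥ 0` with
`h n ≤ K * f (M * n)` for all `n ≥ N₀`. -/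
def FPreceq (h f : ℕ → ℝ) : Prop :=
  ∃ K M N₀ : ℕ, 0 < K ∧ 0 < M ∧ ∀ n ≥ N₀, h n ≤ (K : ℝ) * f (M * n)

/-- `h ≪ f` : there is an unbounded nondecreasing nonnegative function `t`
with `h·t ⪯ f`. -/
def FLl (h f : ℕ → ℝ) : Prop :=
  ∃ t : ℕ → ℝ, Monotone t ∧ (∀ n, 0 ≤ t n) ∧ (∀ C : ℝ, ∃ n, C < t n) ∧
    FPreceq (fun n => h n * t n) f

/-!
`f` is a step function, equal to `2 n_i` on the block `[n_i, n_{i+1})`. It never exceeds `2n`,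
so `f ⪯ 𝔦`; it equals `2n` at the left end of every block, so `f·t ⪯ 𝔦` keeps `t(n_i)` bounded,
which rules out `f ≪ 𝔦`. The blocks are very long, however (`n_{i+1} = 4^i n_i`): for fixed
`K, M` and `n = c n_i` with `c > 2K` and `M c < 4^i`, the point `M n` still lies in block `i`, so
`K f(M n) = 2K n_i < n`, which rules out `𝔦 ⪯ f`.
-/

theorem StrictMono.exists_le_lt_succ {u : ℕ → ℕ} (hu : StrictMono u) {n : ℕ} (hn : u 0 ≤ n) :
    ∃ i, u i ≤ n ∧ n < u (i + 1) := by
  have hex : ∃ j, n < u j := ⟨n + 1, n.lt_succ_self.trans_le (hu.id_le _)⟩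
  obtain ⟨i, hi⟩ : ∃ i, Nat.find hex = i + 1 :=
    Nat.exists_eq_succ_of_ne_zero fun h => (Nat.find_spec hex).not_ge (h ▸ hn)
  exact ⟨i, not_lt.1 (Nat.find_min hex (by omega)), hi ▸ Nat.find_spec hex⟩

theorem not_fLl_id_of_frequently_le {f : ℕ → ℝ} (hf : ∀ N : ℕ, ∃ n ≥ N, 0 < n ∧ (n : ℝ) ≤ f n) :
    ¬ FLl f (fun n => (n : ℝ)) := by
  rintro ⟨t, ht_mono, ht_nonneg, ht_unbdd, K, M, N₀, -, -, hle⟩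
  obtain ⟨n₀, hn₀⟩ := ht_unbdd (K * M)
  obtain ⟨n, hn, hn_pos, hfn⟩ := hf (max n₀ N₀)
  have htn : (K : ℝ) * M < t n := hn₀.trans_le (ht_mono (le_of_max_le_left hn))
  have hn_pos' : (0 : ℝ) < n := by exact_mod_cast hn_pos
  have hK := hle n (le_of_max_le_right hn)
  push_cast at hK
  nlinarith [ht_nonneg n]

section StepFunction

variable {u : ℕ → ℕ} {f : ℕ → ℝ} (hu : StrictMono u)
  (hf : ∀ i n, u i ≤ n → n < u (i + 1) → f n = 2 * u i)
include hu hf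

theorem step_le_of_le {a b : ℕ} (ha : u 0 ≤ a) (hab : a ≤ b) : f a ≤ f b := by
  obtain ⟨i, hia, hai⟩ := hu.exists_le_lt_succ ha
  obtain ⟨j, hjb, hbj⟩ := hu.exists_le_lt_succ (ha.trans hab)
  have hij : i ≤ j := Nat.lt_succ_iff.1 (hu.lt_iff_lt.1 (hia.trans_lt (hab.trans_lt hbj)))
  rw [hf i a hia hai, hf j b hjb hbj]
  gcongr
  exact hu.monotone hij

theorem step_fPreceq_id : FPreceq f (fun n => (n : ℝ)) := by
  refine ⟨2, 1, u 0, two_pos, one_pos, fun n hn => ?_⟩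
  obtain ⟨i, hin, hni⟩ := hu.exists_le_lt_succ hn
  rw [hf i n hin hni, one_mul]
  push_cast
  gcongr

theorem step_not_fLl_id (hu₀ : 0 < u 0) : ¬ FLl f (fun n => (n : ℝ)) := by
  refine not_fLl_id_of_frequently_le fun N =>
    ⟨u N, hu.id_le N, hu₀.trans_le (hu.monotone N.zero_le), ?_⟩
  rw [hf N (u N) le_rfl (hu (Nat.lt_succ_self N))]
  linarith [(u N).cast_nonneg (α := ℝ)]

theorem step_not_id_fPreceq (hu₀ : 0 < u 0) (hgap : ∀ C, ∃ i, C * u i < u (i + 1)) :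
    ¬ FPreceq (fun n => (n : ℝ)) f := by
  rintro ⟨K, M, N₀, -, hM, hle⟩
  set c := 2 * K + N₀ + 1
  obtain ⟨i, hi⟩ := hgap (M * c)
  have hui : 1 ≤ u i := hu₀.trans_le (hu.monotone i.zero_le)
  have hfMn : f (M * (c * u i)) = 2 * u i := by
    refine hf i _ ?_ (by rw [← mul_assoc]; exact hi)
    calc u i = 1 * (1 * u i) := by ring
      _ ≤ M * (c * u i) := by gcongr <;> omega
  have hK := hle (c * u i) ((show N₀ ≤ c by omega).trans (Nat.le_mul_of_pos_right c hui))
  rw [hfMn] at hK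
  have hui' : (1 : ℝ) ≤ u i := by exact_mod_cast hui
  push_cast [c] at hK
  nlinarith

end StepFunction

section Sequence

variable {nseq : ℕ → ℕ} (hone : nseq 1 = 1)
  (hrec : ∀ i, 1 ≤ i → nseq (i + 1) = nseq i * 2 ^ (2 * i))
include hone hrec

theorem nseq_succ_pos (i : ℕ) : 0 < nseq (i + 1) := by
  induction i with
  | zero => rw [hone]; exact one_pos
  | succ i ih => rw [hrec (i + 1) (Nat.le_add_left 1 i)]; positivity

theorem strictMono_nseq_succ : StrictMono fun i => nseq (i + 1) := by
  refine strictMono_nat_of_lt_succ fun i => ?_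
  rw [hrec (i + 1) (Nat.le_add_left 1 i)]
  exact lt_mul_right (nseq_succ_pos hone hrec i) (Nat.one_lt_two_pow (by omega))

theorem exists_mul_nseq_succ_lt (C : ℕ) : ∃ i, C * nseq (i + 1) < nseq (i + 1 + 1) := by
  refine ⟨C, ?_⟩
  rw [hrec (C + 1) (Nat.le_add_left 1 C), mul_comm]
  have hC : C < 2 ^ (2 * (C + 1)) :=
    Nat.lt_two_pow_self.trans (Nat.pow_lt_pow_right one_lt_two (by omega))
  exact Nat.mul_lt_mul_of_pos_left hC (nseq_succ_pos hone hrec C)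

end Sequence

/-- Let `n₁ = 1`, `n_{i+1} = n_i·2^{2i}` for `i ≥ 1`, and let `f` be the
function on `[1,∞)` with `f(n) = 2·n_i` for `n_i ≤ n < n_{i+1}`.  Then `f` is
nondecreasing (on `[1,∞)`), `f ⪯ 𝔦`, `¬(𝔦 ⪯ f)` (so `f ≺ 𝔦`), and yet
`¬(f ≪ 𝔦)`.  In particular `f ≺ 𝔦` does not imply `f ≪ 𝔦`. -/
theorem fprec_not_implies_fll (nseq : ℕ → ℕ) (hone : nseq 1 = 1)
    (hrec : ∀ i, 1 ≤ i → nseq (i + 1) = nseq i * 2 ^ (2 * i))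
    (f : ℕ → ℝ)
    (hf : ∀ i, 1 ≤ i → ∀ n : ℕ, nseq i ≤ n → n < nseq (i + 1) → f n = 2 * (nseq i : ℝ)) :
    (∀ a b : ℕ, 1 ≤ a → a ≤ b → f a ≤ f b) ∧
    FPreceq f (fun n => (n : ℝ)) ∧
    ¬ FPreceq (fun n => (n : ℝ)) f ∧
    ¬ FLl f (fun n => (n : ℝ)) := by
  have hu := strictMono_nseq_succ hone hrec
  have hu₀ : 0 < nseq 1 := nseq_succ_pos hone hrec 0
  have hfu : ∀ i n, nseq (i + 1) ≤ n → n < nseq (i + 1 + 1) → f n = 2 * nseq (i + 1) :=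
    fun i => hf (i + 1) (Nat.le_add_left 1 i)
  exact ⟨fun a b ha hab => step_le_of_le hu hfu (hone.trans_le ha) hab, step_fPreceq_id hu hfu,
    step_not_id_fPreceq hu hfu hu₀ (exists_mul_nseq_succ_lt hone hrec),
    step_not_fLl_id hu hfu hu₀⟩
end

section
/- Let L ⊆ S* be a normal form of G and let u ∈ S* be a nonempty word with π(u) = e. Define L' = { u^{|w|²}·w : w ∈ L }, where u^k denotes the k-fold concatenation of u. Then L' is a normal form of G and its fellow-traveler function s satisfies s(n) ⪯ √n. -/
/-- The alphabet `S = A ∪ A⁻¹` for a generating tuple of `m` elements: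
a letter is a generator index together with a sign (`true` = the generator,
`false` = its inverse). -/
abbrev Letter (m : ℕ) := Fin m × Bool

/-- Evaluation of a letter in the group. -/
def evalLetter {G : Type*} [Group G] {m : ℕ} (A : Fin m → G) (l : Letter m) : G :=
  if l.2 then A l.1 else (A l.1)⁻¹

/-- The canonical projection `π : S* → G`. -/
def wordEval {G : Type*} [Group G] {m : ℕ} (A : Fin m → G) (w : List (Letter m)) : G :=
  (w.map (evalLetter A)).prod

/-- The word metric `d_A` on `G` relative to `A`. -/
noncomputable def wordDist {G : Type*} [Group G] {m : ℕ} (A : Fin m → G) (g h : G) : ℕ :=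
  sInf {n | ∃ w : List (Letter m), wordEval A w = g⁻¹ * h ∧ w.length = n}

/-- `L ⊆ S*` is a normal form of `G`: `π` restricted to `L` is a bijection onto `G`. -/
def IsNormalForm {G : Type*} [Group G] {m : ℕ} (A : Fin m → G)
    (L : Set (List (Letter m))) : Prop :=
  ∀ g : G, ∃! w, w ∈ L ∧ wordEval A w = g

/-- The fellow-traveler function `s(n)` of a normal form `L`. -/
noncomputable def ftFun {G : Type*} [Group G] {m : ℕ} (A : Fin m → G)
    (L : Set (List (Letter m))) (n : ℕ) : ℕ :=
  sSup {d | ∃ t ≤ n, ∃ w₁ ∈ L, ∃ w₂ ∈ L, ∃ i : Fin m,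
    wordEval A w₁ * A i = wordEval A w₂ ∧
    d = wordDist A (wordEval A (w₁.take t)) (wordEval A (w₂.take t))}

/-- A normal form is quasigeodesic if `|w| ≤ C (d_A(π(w)) + 1)` for all `w ∈ L`. -/
def Quasigeodesic {G : Type*} [Group G] {m : ℕ} (A : Fin m → G)
    (L : Set (List (Letter m))) : Prop :=
  ∃ C : ℝ, 0 < C ∧ ∀ w ∈ L, (w.length : ℝ) ≤ C * ((wordDist A 1 (wordEval A w) : ℝ) + 1)

/-- A normal form is quasiregular with constant `c` if every prefix of a word of `L`
can be extended by a word of length at most `c` to a word of `L`. -/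
def Quasiregular {m : ℕ} (L : Set (List (Letter m))) (c : ℕ) : Prop :=
  ∀ w ∈ L, ∀ u : List (Letter m), u <+: w → ∃ x : List (Letter m), x.length ≤ c ∧ u ++ x ∈ L

/-- A normal form is quasiprefix-closed with constant `C`. -/
def QuasiPrefixClosed {m : ℕ} (L : Set (List (Letter m))) (C : ℕ) : Prop :=
  ∀ u v : List (Letter m), u ++ v ∈ L →
    ∃ x : List (Letter m), x <+: v ∧ x.length ≤ C ∧ u ++ x ∈ L

/-- A language is prefix-closed. -/
def PrefixClosed {m : ℕ} (L : Set (List (Letter m))) : Prop :=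
  ∀ w ∈ L, ∀ u : List (Letter m), u <+: w → u ∈ L


section aux
variable {G : Type*} [Group G] {m : ℕ} (A : Fin m → G)

lemma wordEval_append (x y : List (Letter m)) :
    wordEval A (x ++ y) = wordEval A x * wordEval A y := by
  simp [wordEval]

def invWord (w : List (Letter m)) : List (Letter m) :=
  (w.map fun l => (l.1, !l.2)).reverse

lemma wordEval_invWord (w : List (Letter m)) :
    wordEval A (invWord w) = (wordEval A w)⁻¹ := by
  induction w with
  | nil => simp [invWord, wordEval]
  | cons l w ih =>
      have h1 : invWord (l :: w) = invWord w ++ [(l.1, !l.2)] := by simp [invWord]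
      have h2 : evalLetter A (l.1, !l.2) = (evalLetter A l)⁻¹ := by
        cases hb : l.2 <;> simp [evalLetter, hb]
      rw [h1, wordEval_append, ih]
      simp [wordEval, h2, wordEval_append]

lemma wordEval_flatten_replicate (u : List (Letter m)) (hue : wordEval A u = 1) (k : ℕ) :
    wordEval A (List.replicate k u).flatten = 1 := by
  induction k with
  | zero => simp [wordEval]
  | succ k ih =>
      rw [List.replicate_succ, List.flatten_cons, wordEval_append, hue, ih, one_mul]

lemma take_flatten_replicate (u : List (Letter m)) (hue : wordEval A u = 1) (k t : ℕ) :
    ∃ p : List (Letter m), p.length ≤ u.length ∧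
      wordEval A (((List.replicate k u).flatten).take t) = wordEval A p := by
  induction k generalizing t with
  | zero => exact ⟨[], by simp, by simp⟩
  | succ k ih =>
      rw [List.replicate_succ, List.flatten_cons]
      by_cases h : t ≤ u.length
      · refine ⟨u.take t, by simp, ?_⟩
        rw [List.take_append_of_le_length h]
      · push_neg at h
        obtain ⟨p, hp1, hp2⟩ := ih (t - u.length)
        refine ⟨p, hp1, ?_⟩
        rw [List.take_append, List.take_of_length_le (le_of_lt h),
          wordEval_append, hue, one_mul, hp2]

lemma wordDist_le (g h : G) (w : List (Letter m)) (hw : wordEval A w = g⁻¹ * h) :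
    wordDist A g h ≤ w.length :=
  Nat.sInf_le ⟨w, hw, rfl⟩

end aux


/-- Let `L ⊆ S*` be a normal form of `G` and `u` a nonempty word with `π(u) = e`.
Then `L' = { u^{|w|²}·w : w ∈ L }` is a normal form of `G` and its fellow-traveler
function `s` satisfies `s(n) ⪯ √n`. -/
theorem firstWay_normalForm_sqrt_fellow {G : Type*} [Group G] [Infinite G] {m : ℕ}
    (A : Fin m → G) (L : Set (List (Letter m))) (hL : IsNormalForm A L)
    (u : List (Letter m)) (hu : u ≠ []) (hue : wordEval A u = 1) :
    IsNormalForm A {w' | ∃ w ∈ L, w' = (List.replicate (w.length ^ 2) u).flatten ++ w} ∧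
    FPreceq
      (fun n => (ftFun A {w' | ∃ w ∈ L, w' = (List.replicate (w.length ^ 2) u).flatten ++ w} n : ℝ))
      (fun n => Real.sqrt n) := by
  set L' : Set (List (Letter m)) :=
    {w' | ∃ w ∈ L, w' = (List.replicate (w.length ^ 2) u).flatten ++ w} with hL'def
  have hevalmem : ∀ w ∈ L,
      wordEval A ((List.replicate (w.length ^ 2) u).flatten ++ w) = wordEval A w := by
    intro w hw
    rw [wordEval_append, wordEval_flatten_replicate A u hue, one_mul]
  constructor
  · intro g
    obtain ⟨w, ⟨hwL, hwe⟩, huniq⟩ := hL g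
    refine ⟨(List.replicate (w.length ^ 2) u).flatten ++ w,
      ⟨⟨w, hwL, rfl⟩, by rw [hevalmem w hwL, hwe]⟩, ?_⟩
    rintro y ⟨⟨w₂, hw₂, rfl⟩, hy⟩
    rw [hevalmem w₂ hw₂] at hy
    rw [huniq w₂ ⟨hw₂, hy⟩]
  · have hu1 : 1 ≤ u.length := List.length_pos_iff.mpr hu
    have prefbound : ∀ n : ℕ, ∀ w' ∈ L', ∀ t ≤ n,
        ∃ v : List (Letter m), wordEval A v = wordEval A (w'.take t) ∧
          v.length ≤ u.length + Nat.sqrt n := by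
      rintro n w' ⟨w, hw, rfl⟩ t htn
      set R := (List.replicate (w.length ^ 2) u).flatten with hR
      by_cases h : t ≤ R.length
      · obtain ⟨p, hp1, hp2⟩ := take_flatten_replicate A u hue (w.length ^ 2) t
        refine ⟨p, ?_, le_trans hp1 (Nat.le_add_right _ _)⟩
        rw [List.take_append_of_le_length h, hp2]
      · push_neg at h
        refine ⟨w.take (t - R.length), ?_, ?_⟩
        · rw [List.take_append, List.take_of_length_le (le_of_lt h),
            wordEval_append, wordEval_flatten_replicate A u hue, one_mul]
        · have hRlen : w.length ^ 2 ≤ R.length := by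
            have : R.length = w.length ^ 2 * u.length := by
              simp [hR, List.length_flatten, List.map_replicate, List.sum_replicate,
                smul_eq_mul]
            rw [this]
            calc w.length ^ 2 = w.length ^ 2 * 1 := (mul_one _).symm
              _ ≤ w.length ^ 2 * u.length := Nat.mul_le_mul_left _ hu1
          have hwsq : w.length * w.length ≤ n := by
            have : w.length ^ 2 ≤ n := le_trans hRlen (le_trans (le_of_lt h) htn)
            nlinarith [this]
          have hws : w.length ≤ Nat.sqrt n := Nat.le_sqrt.mpr hwsq
          calc (w.take (t - R.length)).length ≤ w.length := by simp
            _ ≤ Nat.sqrt n := hws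
            _ ≤ u.length + Nat.sqrt n := Nat.le_add_left _ _
    have hft : ∀ n : ℕ, ftFun A L' n ≤ 2 * u.length + 2 * Nat.sqrt n := by
      intro n
      rw [ftFun]
      apply csSup_le'
      rintro d ⟨t, ht, w₁, hw₁, w₂, hw₂, i, -, rfl⟩
      obtain ⟨v₁, hv₁e, hv₁l⟩ := prefbound n w₁ hw₁ t ht
      obtain ⟨v₂, hv₂e, hv₂l⟩ := prefbound n w₂ hw₂ t ht
      have hdle : wordDist A (wordEval A (w₁.take t)) (wordEval A (w₂.take t))
          ≤ (invWord v₁ ++ v₂).length := by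
        apply wordDist_le
        rw [wordEval_append, wordEval_invWord, hv₁e, hv₂e]
      have hlen : (invWord v₁ ++ v₂).length = v₁.length + v₂.length := by
        simp [invWord]
      rw [hlen] at hdle
      omega
    refine ⟨2 * u.length + 2, 1, 1, by omega, one_pos, ?_⟩
    intro n hn
    have h1 : (Nat.sqrt n : ℝ) ≤ Real.sqrt n := by
      rw [show ((Nat.sqrt n : ℕ) : ℝ) = Real.sqrt ((Nat.sqrt n : ℝ) ^ 2) from
        (Real.sqrt_sq (by positivity)).symm]
      apply Real.sqrt_le_sqrt
      exact_mod_cast Nat.sqrt_le' n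
    have h2 : (1 : ℝ) ≤ Real.sqrt n := by
      rw [show (1 : ℝ) = Real.sqrt 1 from Real.sqrt_one.symm]
      apply Real.sqrt_le_sqrt
      exact_mod_cast hn
    have hsq0 : (0 : ℝ) ≤ Real.sqrt n := Real.sqrt_nonneg _
    have hcast : ((ftFun A L' n : ℕ) : ℝ) ≤ (2 * u.length : ℝ) + 2 * (Nat.sqrt n : ℝ) := by
      exact_mod_cast hft n
    have : ((ftFun A L' n : ℕ) : ℝ) ≤ ((2 * u.length + 2 : ℕ) : ℝ) * Real.sqrt ((1 * n : ℕ) : ℝ) := by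
      have hul : (0:ℝ) ≤ (u.length : ℝ) := Nat.cast_nonneg _
      calc ((ftFun A L' n : ℕ) : ℝ) ≤ (2 * u.length : ℝ) + 2 * (Nat.sqrt n : ℝ) := hcast
        _ ≤ (2 * u.length : ℝ) * Real.sqrt n + 2 * Real.sqrt n := by nlinarith
        _ = ((2 * u.length + 2 : ℕ) : ℝ) * Real.sqrt n := by push_cast; ring
        _ = ((2 * u.length + 2 : ℕ) : ℝ) * Real.sqrt ((1 * n : ℕ) : ℝ) := by
          norm_num
    simpa using this
end

section
/- Let L ⊆ S* be a normal form of G and let u ∈ S* be a nonempty word with π(u) = e. Then the normal form L' = { u^{|w|²}·w : w ∈ L } is not quasiregular: there is no constant c ≥ 0 such that every prefix v of a word of L' admits a word x ∈ S* with |x| ≤ c and vx ∈ L'. -/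
/-!
A word `u^{k²} w` of `L'` with `|w| = k` has length `k²|u| + k`, and the next admissible length,
`(k+1)²|u| + k + 1`, exceeds it by more than `k`. Since `G` is infinite, `L` contains words `w` of
length `n > c`, and every word of `L'` extending the prefix `u^{n²}` of `u^{n²} w` is then at least
`n` letters longer than that prefix.
-/

theorem Set.Infinite.exists_length_gt {α : Type*} [Finite α] {L : Set (List α)}
    (hL : L.Infinite) (c : ℕ) : ∃ w ∈ L, c < w.length := by
  by_contra! h
  exact hL ((List.finite_length_le α c).subset h)

theorem IsNormalForm.infinite {G : Type*} [Group G] [Infinite G] {m : ℕ} {A : Fin m → G}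
    {L : Set (List (Letter m))} (hL : IsNormalForm A L) : L.Infinite := by
  have hsurj : wordEval A '' L = Set.univ :=
    Set.eq_univ_of_forall fun g => by
      obtain ⟨w, ⟨hw, hwg⟩, -⟩ := hL g
      exact ⟨w, hw, hwg⟩
  exact Set.Infinite.of_image _ (hsurj ▸ Set.infinite_univ)

theorem List.length_flatten_replicate {α : Type*} (u : List α) (N : ℕ) :
    (List.replicate N u).flatten.length = N * u.length := by
  simp

theorem sq_mul_add_le_sq_mul_add_of_sq_mul_le {p n k : ℕ} (hp : 0 < p)
    (h : n ^ 2 * p ≤ k ^ 2 * p + k) : n ^ 2 * p + n ≤ k ^ 2 * p + k := by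
  rcases Nat.lt_or_ge k n with hkn | hnk
  · have : (k + 1) ^ 2 * p ≤ n ^ 2 * p := by gcongr; omega
    nlinarith
  · have : n ^ 2 * p ≤ k ^ 2 * p := by gcongr
    omega

theorem firstWay_not_quasiregular_general {G : Type*} [Group G] [Infinite G] {m : ℕ}
    (A : Fin m → G) (L : Set (List (Letter m))) (hL : IsNormalForm A L)
    (u : List (Letter m)) (hu : u ≠ []) :
    ¬ ∃ c : ℕ,
      Quasiregular {w' | ∃ w ∈ L, w' = (List.replicate (w.length ^ 2) u).flatten ++ w} c := by
  rintro ⟨c, hqr⟩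
  obtain ⟨w, hw, hcw⟩ := hL.infinite.exists_length_gt c
  obtain ⟨x, hxc, w₂, -, hx⟩ := hqr _ ⟨w, hw, rfl⟩ _ (List.prefix_append _ w)
  have hlen : w.length ^ 2 * u.length + x.length = w₂.length ^ 2 * u.length + w₂.length := by
    simpa only [List.length_append, List.length_flatten_replicate] using congrArg List.length hx
  have hgap := sq_mul_add_le_sq_mul_add_of_sq_mul_le (List.length_pos_iff.mpr hu)
    (hlen ▸ Nat.le_add_right _ _)
  omega

/-- Let `L ⊆ S*` be a normal form of `G` and `u` a nonempty word with `π(u) = e`.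
Then the normal form `L' = { u^{|w|²}·w : w ∈ L }` is not quasiregular: there is no
constant `c ≥ 0` such that every prefix `v` of a word of `L'` admits a word `x` with
`|x| ≤ c` and `v ++ x ∈ L'`. -/
theorem firstWay_not_quasiregular {G : Type*} [Group G] [Infinite G] {m : ℕ}
    (A : Fin m → G) (L : Set (List (Letter m))) (hL : IsNormalForm A L)
    (u : List (Letter m)) (hu : u ≠ []) (hue : wordEval A u = 1) :
    ¬ ∃ c : ℕ,
      Quasiregular {w' | ∃ w ∈ L, w' = (List.replicate (w.length ^ 2) u).flatten ++ w} c :=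
  firstWay_not_quasiregular_general A L hL u hu
end

section
/- Let G be a group generated by a finite set A, let F_A be the free group on A and π : F_A → G the canonical surjection. If ker π is not the normal closure in F_A of any finite subset, then there exist infinitely many reduced words w ∈ F_A with π(w) = e such that for every factorization w = ∏_{j=1}^{k} r_j^{-1} u_j r_j in F_A with r_j, u_j ∈ F_A and π(u_j) = e for all j, there is some index m, 1 ≤ m ≤ k, with |u_m| ≥ |w|. -/
/-- The length of the reduced word representing an element of the free group. -/
def flen {α : Type*} [DecidableEq α] (w : FreeGroup α) : ℕ := w.toWord.length

/-- Let `G` be a group generated by a finite set `A` via the canonical surjection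
`π : F_A → G`.  If `ker π` is not the normal closure of any finite subset, then there
are infinitely many (reduced) words `w ∈ F_A` with `π(w) = e` such that in every
factorization `w = ∏_{j=1}^{k} r_j⁻¹ u_j r_j` with `π(u_j) = e` for all `j`, some
factor satisfies `|u_m| ≥ |w|`. -/
theorem infinitely_many_bad_loops {α : Type*} [Fintype α] [DecidableEq α]
    {G : Type*} [Group G] (B : α → G)
    (hsurj : Function.Surjective (FreeGroup.lift B))
    (hker : ¬ ∃ T : Set (FreeGroup α), T.Finite ∧
        MonoidHom.ker (FreeGroup.lift B) = Subgroup.normalClosure T) :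
    {w : FreeGroup α | FreeGroup.lift B w = 1 ∧
      ∀ (k : ℕ) (r u : Fin k → FreeGroup α),
        (∀ j, FreeGroup.lift B (u j) = 1) →
        w = (List.ofFn fun j => (r j)⁻¹ * u j * r j).prod →
        ∃ i : Fin k, flen w ≤ flen (u i)}.Infinite := by
  set S := {w : FreeGroup α | FreeGroup.lift B w = 1 ∧
      ∀ (k : ℕ) (r u : Fin k → FreeGroup α),
        (∀ j, FreeGroup.lift B (u j) = 1) →
        w = (List.ofFn fun j => (r j)⁻¹ * u j * r j).prod →
        ∃ i : Fin k, flen w ≤ flen (u i)} with hS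
  by_contra hfin
  rw [Set.not_infinite] at hfin
  -- bound on lengths of elements of S
  obtain ⟨n, hn⟩ : ∃ n : ℕ, ∀ w ∈ S, flen w ≤ n := by
    obtain ⟨n, hn⟩ := (hfin.image flen).bddAbove
    exact ⟨n, fun w hw => hn (Set.mem_image_of_mem _ hw)⟩
  set T := {w : FreeGroup α | FreeGroup.lift B w = 1 ∧ flen w ≤ n} with hT
  have hTfin : T.Finite := by
    have h1 : {w : FreeGroup α | flen w ≤ n}.Finite :=
      Set.Finite.preimage (FreeGroup.toWord_injective.injOn)
        (List.finite_length_le (α × Bool) n)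
    exact h1.subset fun w hw => hw.2
  refine hker ⟨T, hTfin, le_antisymm ?_ ?_⟩
  · -- ker ≤ normalClosure T, by strong induction on length
    have key : ∀ m (w : FreeGroup α), flen w = m → FreeGroup.lift B w = 1 →
        w ∈ Subgroup.normalClosure T := by
      intro m
      induction m using Nat.strong_induction_on with
      | _ m ih =>
        intro w hwm hw1
        by_cases hle : flen w ≤ n
        · exact Subgroup.subset_normalClosure ⟨hw1, hle⟩
        · have hwS : w ∉ S := fun h => hle (hn w h)
          have hbad : ¬ ∀ (k : ℕ) (r u : Fin k → FreeGroup α),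
              (∀ j, FreeGroup.lift B (u j) = 1) →
              w = (List.ofFn fun j => (r j)⁻¹ * u j * r j).prod →
              ∃ i : Fin k, flen w ≤ flen (u i) := fun h => hwS ⟨hw1, h⟩
          push_neg at hbad
          obtain ⟨k, r, u, h1, h2, h3⟩ := hbad
          rw [h2]
          refine Subgroup.list_prod_mem _ ?_
          intro x hx
          rw [List.mem_ofFn] at hx
          obtain ⟨j, rfl⟩ := hx
          have hu : u j ∈ Subgroup.normalClosure T :=
            ih (flen (u j)) (hwm ▸ h3 j) _ rfl (h1 j)
          simpa using Subgroup.normalClosure_normal.conj_mem _ hu (r j)⁻¹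
    exact fun w hw => key (flen w) w rfl hw
  · exact Subgroup.normalClosure_le_normal fun w hw => hw.1
end
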